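/- Let r > 0, {v₀,v₁,w} a positive oriented orthonormal system, k₀ = √(1+r²)/r, and α(t) = √(1+r²) w + r cos(2πt) v₁ + r sin(2πt) v₀. If W : ℝ → ℝ³ is a C², 1-periodic map with ⟨W(t), α(t)⟩ₘ = 0 for all t, solving the linearized equation 0 = −D_t²W + ⟨α̇,α̇⟩ₘ W − ⟨W, α̇⟩ₘ α̇ + |α̇|ₘ⁻¹ ⟨D_tW, α̇⟩ₘ k₀ (α ×ₘ α̇) + |α̇|ₘ k₀ (α ×ₘ D_tW), then W is a real linear combination of W₁(t) = α̇(t), W₂(t) = √(1+r²) v₁ + r cos(2πt) w, and W₃(t) = √(1+r²) v₀ + r sin(2πt) w. -/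

import Mathlib

noncomputable section

open Real

/-- The Minkowski inner product on ℝ³. -/
def mink (v w : Fin 3 → ℝ) : ℝ := v 0 * w 0 + v 1 * w 1 - v 2 * w 2

/-- The twisted cross product on ℝ³. -/
def mcross (v w : Fin 3 → ℝ) : Fin 3 → ℝ :=
  ![v 2 * w 1 - v 1 * w 2, v 0 * w 2 - v 2 * w 0, v 0 * w 1 - v 1 * w 0]

/-- A positive oriented orthonormal system with respect to the Minkowski metric. -/
def posOrth (v₀ v₁ w : Fin 3 → ℝ) : Prop :=
  mink v₀ v₁ = 0 ∧ mink v₀ w = 0 ∧ mink v₁ w = 0 ∧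
  mink v₀ v₀ = 1 ∧ mink v₁ v₁ = 1 ∧ mink w w = -1 ∧
  mcross v₀ v₁ = w

/-- Membership in the hyperbolic plane ℍ ⊂ ℝ³. -/
def inH (x : Fin 3 → ℝ) : Prop := x 2 ^ 2 - x 0 ^ 2 - x 1 ^ 2 = 1 ∧ 0 < x 2

/-- The covariant derivative on ℍ of a tangent vector field `V` along a curve `γ` in ℍ:
`D_t V(t) = V̇(t) + ⟨V̇(t), γ(t)⟩ₘ γ(t)`. -/
def covDt (γ V : ℝ → Fin 3 → ℝ) : ℝ → Fin 3 → ℝ :=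
  fun t => deriv V t + mink (deriv V t) (γ t) • γ t

/-- The linearization of the prescribed geodesic curvature operator along a curve α in ℍ:
`L W = −D_t²W + ⟨α̇,α̇⟩ₘ W − ⟨W,α̇⟩ₘ α̇ + |α̇|ₘ⁻¹ ⟨D_tW,α̇⟩ₘ k₀ (α ×ₘ α̇) + |α̇|ₘ k₀ (α ×ₘ D_tW)`. -/
def linOp (k₀ : ℝ) (α W : ℝ → Fin 3 → ℝ) (t : ℝ) : Fin 3 → ℝ :=
  -(covDt α (covDt α W) t) + mink (deriv α t) (deriv α t) • W t
    - mink (W t) (deriv α t) • deriv α t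
    + ((Real.sqrt (mink (deriv α t) (deriv α t)))⁻¹ * mink (covDt α W t) (deriv α t) * k₀) •
        mcross (α t) (deriv α t)
    + (Real.sqrt (mink (deriv α t) (deriv α t)) * k₀) • mcross (α t) (covDt α W t)

/-! Along the circle `α`, whose geodesic curvature is the constant `k₀`, the unit tangent `T` and
unit normal `N` satisfy `D_t T = -|α̇| k₀ N` and `D_t N = |α̇| k₀ T`, and `α ×ₘ` rotates the tangent
plane by a right angle (`T ↦ -N`, `N ↦ T`). Writing a tangent field as `W = f T + g N`, the
linearized operator therefore becomes diagonal in this frame, and `L W = 0` is the scalar system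
`f'' = -2π√(1+r²) g'`, `g'' = -4π² g`. Hence `g = A cos 2πt + B sin 2πt`, and `f` is `f(0)` plus
an antiderivative of `-2π√(1+r²) g` plus a linear drift, which 1-periodicity kills. The three
constants that remain are the coefficients of `W₁ = 2πr T`, `W₂ = -√(1+r²) sin 2πt T + cos 2πt N`
and `W₃ = √(1+r²) cos 2πt T + sin 2πt N`. -/

section Algebra

variable (u v z : Fin 3 → ℝ) (a : ℝ)

@[simp] lemma mink_add_left : mink (u + v) z = mink u z + mink v z := by simp [mink]; ring
@[simp] lemma mink_add_right : mink z (u + v) = mink z u + mink z v := by simp [mink]; ring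
@[simp] lemma mink_sub_left : mink (u - v) z = mink u z - mink v z := by simp [mink]; ring
@[simp] lemma mink_sub_right : mink z (u - v) = mink z u - mink z v := by simp [mink]; ring
@[simp] lemma mink_zero_left : mink 0 z = 0 := by simp [mink]
@[simp] lemma mink_smul_left : mink (a • u) z = a * mink u z := by simp [mink]; ring
@[simp] lemma mink_smul_right : mink z (a • u) = a * mink z u := by simp [mink]; ring
lemma mink_comm : mink u v = mink v u := by simp [mink]; ring

@[simp] lemma mcross_add_right : mcross z (u + v) = mcross z u + mcross z v := by
  funext i; fin_cases i <;> simp [mcross] <;> ring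
@[simp] lemma mcross_sub_left : mcross (u - v) z = mcross u z - mcross v z := by
  funext i; fin_cases i <;> simp [mcross] <;> ring
@[simp] lemma mcross_sub_right : mcross z (u - v) = mcross z u - mcross z v := by
  funext i; fin_cases i <;> simp [mcross] <;> ring
@[simp] lemma mcross_smul_left : mcross (a • u) z = a • mcross u z := by
  funext i; fin_cases i <;> simp [mcross] <;> ring
@[simp] lemma mcross_smul_right : mcross z (a • u) = a • mcross z u := by
  funext i; fin_cases i <;> simp [mcross] <;> ring
@[simp] lemma mcross_self : mcross u u = 0 := by
  funext i; fin_cases i <;> simp [mcross] <;> ring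
lemma mcross_anticomm : mcross u v = -mcross v u := by
  funext i; fin_cases i <;> simp [mcross] <;> ring

lemma mcross_mcross : mcross u (mcross v z) = mink u v • z - mink u z • v := by
  funext i; fin_cases i <;> simp [mcross, mink] <;> ring

end Algebra

namespace posOrth

variable {e₀ e₁ e₂ : Fin 3 → ℝ}

lemma mcross_one_two (h : posOrth e₀ e₁ e₂) : mcross e₁ e₂ = -e₀ := by
  obtain ⟨h01, -, -, -, h11, -, rfl⟩ := h
  simp [mcross_mcross, mink_comm e₁ e₀, h01, h11]

lemma mcross_two_zero (h : posOrth e₀ e₁ e₂) : mcross e₂ e₀ = -e₁ := by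
  obtain ⟨h01, -, -, h00, -, -, rfl⟩ := h
  simp [mcross_anticomm _ e₀, mcross_mcross, h00, h01]

-- Expand `e₂ ×ₘ (u ×ₘ e₂)` twice with `mcross_mcross`, writing `e₂ = e₀ ×ₘ e₁` the second time.
lemma sum_repr (h : posOrth e₀ e₁ e₂) (u : Fin 3 → ℝ) :
    u = mink u e₀ • e₀ + mink u e₁ • e₁ - mink u e₂ • e₂ := by
  have h21 : mcross e₂ e₁ = e₀ := by rw [mcross_anticomm, h.mcross_one_two, neg_neg]
  have h20 := h.mcross_two_zero
  obtain ⟨-, -, -, -, -, h22, h01⟩ := h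
  have key := mcross_mcross e₂ u e₂
  rw [← h01, mcross_mcross u, h01] at key
  simp only [mcross_sub_right, mcross_smul_right, h21, h20, h22, mink_comm e₂ u] at key
  linear_combination (norm := module) -key

lemma rotate (h : posOrth e₀ e₁ e₂) {c s : ℝ} (hcs : c ^ 2 + s ^ 2 = 1) :
    posOrth (c • e₀ - s • e₁) (s • e₀ + c • e₁) e₂ := by
  obtain ⟨h01, h02, h12, h00, h11, h22, hx⟩ := h
  have h10 : mink e₁ e₀ = 0 := by rw [mink_comm, h01]
  refine ⟨?_, ?_, ?_, ?_, ?_, h22, ?_⟩ <;>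
    simp only [mink_add_left, mink_add_right, mink_sub_left, mink_sub_right, mink_smul_left,
      mink_smul_right, mcross_add_right, mcross_sub_left, mcross_smul_left, mcross_smul_right,
      mcross_self, mcross_anticomm e₁ e₀, h01, h02, h12, h10, h00, h11, hx]
  · ring
  · ring
  · ring
  · linear_combination hcs
  · linear_combination hcs
  · linear_combination (norm := module) hcs • e₂

lemma boost (h : posOrth e₀ e₁ e₂) {c s : ℝ} (hcs : c ^ 2 - s ^ 2 = 1) :
    posOrth e₀ (c • e₁ + s • e₂) (s • e₁ + c • e₂) := by
  have h02' : mcross e₀ e₂ = e₁ := by rw [mcross_anticomm, h.mcross_two_zero, neg_neg]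
  obtain ⟨h01, h02, h12, h00, h11, h22, hx⟩ := h
  have h21 : mink e₂ e₁ = 0 := by rw [mink_comm, h12]
  refine ⟨?_, ?_, ?_, h00, ?_, ?_, ?_⟩ <;>
    simp only [mink_add_left, mink_add_right, mink_smul_left, mink_smul_right,
      mcross_add_right, mcross_smul_right, h01, h02, h12, h21, h11, h22, hx, h02']
  · ring
  · ring
  · ring
  · linear_combination hcs
  · linear_combination -hcs
  · module

lemma eq_zero_of_smul_add_smul_eq_zero (h : posOrth e₀ e₁ e₂) {a b : ℝ}
    (hab : a • e₀ + b • e₁ = 0) : a = 0 ∧ b = 0 := by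
  obtain ⟨h01, -, -, h00, h11, -, -⟩ := h
  have h10 : mink e₁ e₀ = 0 := by rw [mink_comm, h01]
  have ha := congrArg (mink · e₀) hab
  have hb := congrArg (mink · e₁) hab
  simp only [mink_add_left, mink_smul_left, mink_zero_left, h00, h01, h10, h11] at ha hb
  constructor <;> linarith

end posOrth

lemma ContDiff.mink {n : WithTop ℕ∞} {U V : ℝ → Fin 3 → ℝ} (hU : ContDiff ℝ n U)
    (hV : ContDiff ℝ n V) : ContDiff ℝ n (fun t => mink (U t) (V t)) := by
  have h i := (contDiff_pi.mp hU i).mul (contDiff_pi.mp hV i)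
  exact ((h 0).add (h 1)).sub (h 2)

/-- Frenet frame of a curve `α` in `ℍ` of constant speed `v` and constant geodesic curvature `κ`:
`D_t T = -v κ N` and `D_t N = v κ T`. The `α`-component `v α` of `Ṫ` is forced by `⟨T, α⟩ₘ = 0`. -/
structure IsFrenetFrame (α T N : ℝ → Fin 3 → ℝ) (v κ : ℝ) : Prop where
  posOrth : ∀ t, posOrth (T t) (N t) (α t)
  hasDerivAt_curve : ∀ t, HasDerivAt α (v • T t) t
  hasDerivAt_tangent : ∀ t, HasDerivAt T (v • α t - (v * κ) • N t) t
  hasDerivAt_normal : ∀ t, HasDerivAt N ((v * κ) • T t) t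

namespace IsFrenetFrame

variable {α T N : ℝ → Fin 3 → ℝ} {v κ : ℝ} {f g : ℝ → ℝ}

lemma covDt_smul_add_smul (F : IsFrenetFrame α T N v κ) (hf : Differentiable ℝ f)
    (hg : Differentiable ℝ g) :
    covDt α (fun t => f t • T t + g t • N t) =
      fun t => (deriv f t + v * κ * g t) • T t + (deriv g t - v * κ * f t) • N t := by
  funext t
  obtain ⟨-, hTα, hNα, -, -, hαα, -⟩ := F.posOrth t
  have hd : HasDerivAt (fun t => f t • T t + g t • N t) _ t :=
    ((hf t).hasDerivAt.smul (F.hasDerivAt_tangent t)).add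
      ((hg t).hasDerivAt.smul (F.hasDerivAt_normal t))
  simp only [covDt, hd.deriv, mink_add_left, mink_sub_left, mink_smul_left, hTα, hNα, hαα]
  module

lemma linOp_smul_add_smul (F : IsFrenetFrame α T N v κ) (hv : 0 < v) (hf : ContDiff ℝ 2 f)
    (hg : ContDiff ℝ 2 g) (t : ℝ) :
    linOp κ α (fun t => f t • T t + g t • N t) t =
      (-(deriv (deriv f) t + v * κ * deriv g t)) • T t
        + (v ^ 2 * (1 - κ ^ 2) * g t - deriv (deriv g) t) • N t := by
  obtain ⟨hTN, -, -, hTT, -, -, -⟩ := F.posOrth t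
  have hNT : mink (N t) (T t) = 0 := by rw [mink_comm, hTN]
  have hαT : mcross (α t) (T t) = -N t := (F.posOrth t).mcross_two_zero
  have hαN : mcross (α t) (N t) = T t := by
    rw [mcross_anticomm, (F.posOrth t).mcross_one_two, neg_neg]
  have hf₁ := hf.differentiable two_ne_zero
  have hg₁ := hg.differentiable two_ne_zero
  have hf₂ := hf.differentiable_deriv_two
  have hg₂ := hg.differentiable_deriv_two
  have hspeed : √(mink (v • T t) (v • T t)) = v := by
    rw [mink_smul_left, mink_smul_right, hTT, mul_one, Real.sqrt_mul_self hv.le]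
  have hcov₂ := F.covDt_smul_add_smul (f := fun t => deriv f t + v * κ * g t)
    (g := fun t => deriv g t - v * κ * f t) (by fun_prop) (by fun_prop)
  beta_reduce at hcov₂
  have hF : deriv (fun t => deriv f t + v * κ * g t) t = deriv (deriv f) t + v * κ * deriv g t :=
    ((hf₂ t).hasDerivAt.add ((hg₁ t).hasDerivAt.const_mul _)).deriv
  have hG : deriv (fun t => deriv g t - v * κ * f t) t = deriv (deriv g) t - v * κ * deriv f t :=
    ((hg₂ t).hasDerivAt.sub ((hf₁ t).hasDerivAt.const_mul _)).deriv
  unfold linOp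
  rw [F.covDt_smul_add_smul hf₁ hg₁, hcov₂, (F.hasDerivAt_curve t).deriv, hspeed]
  simp only [hF, hG, mink_add_left, mink_smul_left, mink_smul_right, hTT, hNT,
    mcross_smul_right, mcross_add_right, hαT, hαN]
  field_simp
  module

end IsFrenetFrame

section Circle

variable (r : ℝ) (v₀ v₁ w : Fin 3 → ℝ) (ω : ℝ)

def hypCircle (t : ℝ) : Fin 3 → ℝ :=
  √(1 + r ^ 2) • w + (r * cos (ω * t)) • v₁ + (r * sin (ω * t)) • v₀

def circleTangent (t : ℝ) : Fin 3 → ℝ := cos (ω * t) • v₀ - sin (ω * t) • v₁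

def circleNormal (t : ℝ) : Fin 3 → ℝ :=
  √(1 + r ^ 2) • (sin (ω * t) • v₀ + cos (ω * t) • v₁) + r • w

variable {r v₀ v₁ w}

lemma isFrenetFrame_hypCircle (hr : 0 < r) (h : posOrth v₀ v₁ w) :
    IsFrenetFrame (hypCircle r v₀ v₁ w ω) (circleTangent v₀ v₁ ω) (circleNormal r v₀ v₁ w ω)
      (ω * r) (√(1 + r ^ 2) / r) where
  posOrth t := by
    have hS : √(1 + r ^ 2) ^ 2 - r ^ 2 = 1 := by rw [sq_sqrt (by positivity)]; ring
    have hα : hypCircle r v₀ v₁ w ω t =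
        r • (sin (ω * t) • v₀ + cos (ω * t) • v₁) + √(1 + r ^ 2) • w := by
      simp only [hypCircle]
      module
    rw [hα]
    exact (h.rotate (cos_sq_add_sin_sq (ω * t))).boost hS
  hasDerivAt_curve t := by
    have hc := (hasDerivAt_const_mul ω (x := t)).cos
    have hs := (hasDerivAt_const_mul ω (x := t)).sin
    refine (((hc.const_mul r).smul_const v₁).const_add _ |>.add
      ((hs.const_mul r).smul_const v₀)).congr_deriv ?_
    simp only [circleTangent]
    module
  hasDerivAt_tangent t := by
    have hc := (hasDerivAt_const_mul ω (x := t)).cos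
    have hs := (hasDerivAt_const_mul ω (x := t)).sin
    refine ((hc.smul_const v₀).sub (hs.smul_const v₁)).congr_deriv ?_
    have hS : √(1 + r ^ 2) ^ 2 = 1 + r ^ 2 := sq_sqrt (by positivity)
    simp only [hypCircle, circleNormal]
    field_simp
    linear_combination (norm := module)
      (ω * sin (ω * t)) • hS • v₀ + (ω * cos (ω * t)) • hS • v₁
  hasDerivAt_normal t := by
    have hc := (hasDerivAt_const_mul ω (x := t)).cos
    have hs := (hasDerivAt_const_mul ω (x := t)).sin
    refine (((hs.smul_const v₀).add (hc.smul_const v₁)).const_smul (√(1 + r ^ 2))).add_const _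
      |>.congr_deriv ?_
    simp only [circleTangent]
    field_simp
    module

lemma contDiff_circleTangent {n : WithTop ℕ∞} : ContDiff ℝ n (circleTangent v₀ v₁ ω) := by
  unfold circleTangent
  fun_prop

lemma contDiff_circleNormal {n : WithTop ℕ∞} : ContDiff ℝ n (circleNormal r v₀ v₁ w ω) := by
  unfold circleNormal
  fun_prop

lemma jacobi_cos_eq_frame (t : ℝ) :
    √(1 + r ^ 2) • v₁ + (r * cos (ω * t)) • w =
      (-(√(1 + r ^ 2) * sin (ω * t))) • circleTangent v₀ v₁ ω t
        + cos (ω * t) • circleNormal r v₀ v₁ w ω t := by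
  simp only [circleTangent, circleNormal]
  linear_combination (norm := module) (-√(1 + r ^ 2)) • sin_sq_add_cos_sq (ω * t) • v₁

lemma jacobi_sin_eq_frame (t : ℝ) :
    √(1 + r ^ 2) • v₀ + (r * sin (ω * t)) • w =
      (√(1 + r ^ 2) * cos (ω * t)) • circleTangent v₀ v₁ ω t
        + sin (ω * t) • circleNormal r v₀ v₁ w ω t := by
  simp only [circleTangent, circleNormal]
  linear_combination (norm := module) (-√(1 + r ^ 2)) • sin_sq_add_cos_sq (ω * t) • v₀

lemma deriv_deriv_of_linOp_hypCircle_eq_zero (hr : 0 < r) (hω : 0 < ω) (h : posOrth v₀ v₁ w)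
    {f g : ℝ → ℝ} (hf : ContDiff ℝ 2 f) (hg : ContDiff ℝ 2 g) (t : ℝ)
    (hL : linOp (√(1 + r ^ 2) / r) (hypCircle r v₀ v₁ w ω)
      (fun t => f t • circleTangent v₀ v₁ ω t + g t • circleNormal r v₀ v₁ w ω t) t = 0) :
    deriv (deriv f) t = -(ω * √(1 + r ^ 2)) * deriv g t ∧ deriv (deriv g) t = -ω ^ 2 * g t := by
  have F := isFrenetFrame_hypCircle ω hr h
  have hS : √(1 + r ^ 2) ^ 2 = 1 + r ^ 2 := sq_sqrt (by positivity)
  rw [F.linOp_smul_add_smul (by positivity) hf hg] at hL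
  obtain ⟨hT, hN⟩ := (F.posOrth t).eq_zero_of_smul_add_smul_eq_zero hL
  field_simp at hT hN
  constructor
  · linear_combination -hT
  · linear_combination -hN - ω ^ 2 * g t * hS

end Circle

lemma eq_zero_of_hasDerivAt_neg_sq_mul {φ φ' : ℝ → ℝ} {ω : ℝ} (hω : ω ≠ 0)
    (hφ : ∀ t, HasDerivAt φ (φ' t) t) (hφ' : ∀ t, HasDerivAt φ' (-ω ^ 2 * φ t) t)
    (h₀ : φ 0 = 0) (h₀' : φ' 0 = 0) (t : ℝ) : φ t = 0 := by
  have hE : ∀ t, HasDerivAt (fun t => φ' t ^ 2 + ω ^ 2 * φ t ^ 2) 0 t := fun t =>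
    (((hφ' t).pow 2).add (((hφ t).pow 2).const_mul _)).congr_deriv (by ring)
  have hconst := is_const_of_deriv_eq_zero (fun t => (hE t).differentiableAt)
    (fun t => (hE t).deriv) t 0
  rw [h₀, h₀'] at hconst
  have h2 : ω ^ 2 * φ t ^ 2 = 0 := by nlinarith [sq_nonneg (φ' t), sq_nonneg (ω * φ t)]
  simpa [hω] using h2

lemma eq_cos_sin_of_deriv_deriv_eq_neg_sq_mul {g : ℝ → ℝ} {ω : ℝ} (hω : ω ≠ 0)
    (hg : ContDiff ℝ 2 g) (h : ∀ t, deriv (deriv g) t = -ω ^ 2 * g t) (t : ℝ) :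
    g t = g 0 * cos (ω * t) + deriv g 0 / ω * sin (ω * t) := by
  set A := g 0
  set B := deriv g 0 / ω
  have hc t := (hasDerivAt_const_mul ω (x := t)).cos
  have hs t := (hasDerivAt_const_mul ω (x := t)).sin
  have hg₁ t := (hg.differentiable two_ne_zero t).hasDerivAt
  have hg₂ t := (hg.differentiable_deriv_two t).hasDerivAt
  have key := eq_zero_of_hasDerivAt_neg_sq_mul hω
    (φ := fun t => g t - (A * cos (ω * t) + B * sin (ω * t)))
    (φ' := fun t => deriv g t - (-(A * ω) * sin (ω * t) + B * ω * cos (ω * t)))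
    (fun t => ((hg₁ t).sub (((hc t).const_mul A).add ((hs t).const_mul B))).congr_deriv
      (by ring))
    (fun t => ((hg₂ t).sub (((hs t).const_mul _).add ((hc t).const_mul _))).congr_deriv
      (by rw [h]; ring))
    (by simp [A]) (by simp [B, hω]) t
  linarith

lemma is_const_of_hasDerivAt_const_of_periodic {F : ℝ → ℝ} {K : ℝ}
    (hF : ∀ t, HasDerivAt F K t) (hper : F 1 = F 0) (t : ℝ) : F t = F 0 := by
  have hlin : ∀ t, HasDerivAt (fun t => F t - K * t) 0 t := fun t =>
    ((hF t).sub ((hasDerivAt_id t).const_mul K)).congr_deriv (by simp)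
  have hconst s := is_const_of_deriv_eq_zero (fun t => (hlin t).differentiableAt)
    (fun t => (hlin t).deriv) s 0
  obtain rfl : K = 0 := by linarith [hconst 1]
  simpa using hconst t

lemma eq_sin_cos_of_deriv_deriv_eq_of_periodic {f g : ℝ → ℝ} {c A B : ℝ} (hf : ContDiff ℝ 2 f)
    (hg : Differentiable ℝ g) (h : ∀ t, deriv (deriv f) t = -(2 * π * c) * deriv g t)
    (hgAB : ∀ t, g t = A * cos (2 * π * t) + B * sin (2 * π * t)) (hper : f 1 = f 0) (t : ℝ) :
    f t = f 0 + c * (B * (cos (2 * π * t) - 1) - A * sin (2 * π * t)) := by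
  have hf₂ := hf.differentiable_deriv_two
  have hfirst s : deriv f s + 2 * π * c * g s = deriv f 0 + 2 * π * c * g 0 :=
    is_const_of_deriv_eq_zero (hf₂.add (hg.const_mul _))
      (fun s => by rw [deriv_add (hf₂ s) ((hg s).const_mul _), deriv_const_mul _ (hg s), h]; ring)
      s 0
  have hc s := (hasDerivAt_const_mul (2 * π) (x := s)).cos
  have hs s := (hasDerivAt_const_mul (2 * π) (x := s)).sin
  have hF s : HasDerivAt (fun t => f t + c * (A * sin (2 * π * t) - B * cos (2 * π * t)))
      (deriv f 0 + 2 * π * c * g 0) s :=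
    ((hf.differentiable two_ne_zero s).hasDerivAt.add
      ((((hs s).const_mul A).sub ((hc s).const_mul B)).const_mul c))
      |>.congr_deriv (by rw [← hfirst s, hgAB s]; ring)
  have := is_const_of_hasDerivAt_const_of_periodic hF (by simp [hper]) t
  simp only [mul_zero, sin_zero, cos_zero] at this
  linarith

/-- every 1-periodic C² tangent solution of the linearized equation along α
is a real linear combination of W₁, W₂, W₃. -/
theorem stmt_9 (r : ℝ) (hr : 0 < r) (v₀ v₁ w : Fin 3 → ℝ) (hsys : posOrth v₀ v₁ w)
    (W : ℝ → Fin 3 → ℝ) (hW : ContDiff ℝ 2 W) (hper : ∀ t : ℝ, W (t + 1) = W t)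
    (htan : ∀ t : ℝ,
      mink (W t)
        (Real.sqrt (1 + r ^ 2) • w + (r * Real.cos (2 * Real.pi * t)) • v₁ +
          (r * Real.sin (2 * Real.pi * t)) • v₀) = 0)
    (hsol : ∀ t : ℝ,
      linOp (Real.sqrt (1 + r ^ 2) / r)
        (fun s => Real.sqrt (1 + r ^ 2) • w + (r * Real.cos (2 * Real.pi * s)) • v₁ +
          (r * Real.sin (2 * Real.pi * s)) • v₀) W t = 0) :
    ∃ c₁ c₂ c₃ : ℝ, ∀ t : ℝ,
      W t = c₁ • deriv (fun s => Real.sqrt (1 + r ^ 2) • w +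
              (r * Real.cos (2 * Real.pi * s)) • v₁ + (r * Real.sin (2 * Real.pi * s)) • v₀) t
        + c₂ • (Real.sqrt (1 + r ^ 2) • v₁ + (r * Real.cos (2 * Real.pi * t)) • w)
        + c₃ • (Real.sqrt (1 + r ^ 2) • v₀ + (r * Real.sin (2 * Real.pi * t)) • w) := by
  change ∀ t, mink (W t) (hypCircle r v₀ v₁ w (2 * π) t) = 0 at htan
  change ∀ t, linOp (√(1 + r ^ 2) / r) (hypCircle r v₀ v₁ w (2 * π)) W t = 0 at hsol
  change ∃ c₁ c₂ c₃ : ℝ, ∀ t, W t = c₁ • deriv (hypCircle r v₀ v₁ w (2 * π)) t + _ + _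
  have F := isFrenetFrame_hypCircle (2 * π) hr hsys
  set T := circleTangent v₀ v₁ (2 * π)
  set N := circleNormal r v₀ v₁ w (2 * π)
  set f := fun t => mink (W t) (T t)
  set g := fun t => mink (W t) (N t)
  have hWfg : W = fun t => f t • T t + g t • N t := funext fun t => by
    simpa [htan t] using (F.posOrth t).sum_repr (W t)
  have hf : ContDiff ℝ 2 f := hW.mink (contDiff_circleTangent _)
  have hg : ContDiff ℝ 2 g := hW.mink (contDiff_circleNormal _)
  have hode t := deriv_deriv_of_linOp_hypCircle_eq_zero (2 * π) hr (by positivity) hsys hf hg t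
    (by rw [← hWfg]; exact hsol t)
  have hfper : f 1 = f 0 := by
    have hW₁ : W 1 = W 0 := by simpa using hper 0
    simp [f, T, circleTangent, hW₁]
  have hgAB := eq_cos_sin_of_deriv_deriv_eq_neg_sq_mul (by positivity) hg fun t => (hode t).2
  have hfAB := eq_sin_cos_of_deriv_deriv_eq_of_periodic hf (hg.differentiable two_ne_zero)
    (fun t => (hode t).1) hgAB hfper
  set B := deriv g 0 / (2 * π)
  set c₁ := (f 0 - √(1 + r ^ 2) * B) / (2 * π * r)
  have hc₁ : c₁ * (2 * π * r) = f 0 - √(1 + r ^ 2) * B := div_mul_cancel₀ _ (by positivity)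
  refine ⟨c₁, g 0, B, fun t => ?_⟩
  rw [(F.hasDerivAt_curve t).deriv, jacobi_cos_eq_frame, jacobi_sin_eq_frame, hWfg]
  beta_reduce
  rw [hfAB t, hgAB t]
  linear_combination (norm := module) -hc₁ • T t
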